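/- arXiv:1401.5195 — 4 statements merged into one kernel-verified Lean document; each statement's English description precedes it below -/
import Mathlib

section
/- With the sequences $(v_m)$ and $(w_n)$ as in the context, if $v_{2m} = w_{2n}$ for nonnegative integers $m, n$, then $n \le m \le 2n$. -/
/-!
Under `u (k + 2) = 2 P u (k + 1) - u k` with `P ≥ 1` and `|u 0| ≤ |u 1|`, the sequence `|u k|` is
nondecreasing and each step multiplies it by a factor between `2P - 1` and `2P + 1`. Since
`|v 1|, |w 1|` lie within `S`, resp. `T`, of `C`, this gives
`(2S - 1)^k (C - S) ≤ |v (k + 1)| ≤ (2S + 1)^k (C + S)` and the same with `T` for `w`.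
As `2S + 1 ≤ 2T - 1`, `w (2m + 2)` already outgrows `v (2m)`, which forces `n ≤ m`; as
`2T + 1 ≤ (2S - 1)^2`, `v (4n + 2)` outgrows `w (2n)`, which forces `m ≤ 2n`.
-/

section Recurrence

variable {R : Type*} [CommRing R] [LinearOrder R] [IsStrictOrderedRing R] {P : R} {u : ℕ → R}

theorem abs_recurrence_ge (hP : 0 ≤ P) {k : ℕ} (hrec : u (k + 2) = 2 * P * u (k + 1) - u k) :
    2 * P * |u (k + 1)| - |u k| ≤ |u (k + 2)| := by
  have h := abs_sub_abs_le_abs_sub (2 * P * u (k + 1)) (u k)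
  rwa [abs_mul, abs_of_nonneg (by positivity : (0 : R) ≤ 2 * P), ← hrec] at h

theorem abs_recurrence_le (hP : 0 ≤ P) {k : ℕ} (hrec : u (k + 2) = 2 * P * u (k + 1) - u k) :
    |u (k + 2)| ≤ 2 * P * |u (k + 1)| + |u k| := by
  have h := abs_sub (2 * P * u (k + 1)) (u k)
  rwa [abs_mul, abs_of_nonneg (by positivity : (0 : R) ≤ 2 * P), ← hrec] at h

theorem monotone_abs_of_recurrence (hP : 1 ≤ P) (hrec : ∀ k, u (k + 2) = 2 * P * u (k + 1) - u k)
    (h01 : |u 0| ≤ |u 1|) : Monotone fun k => |u k| := by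
  refine monotone_nat_of_le_succ fun k => ?_
  induction k with
  | zero => exact h01
  | succ k ih =>
    have := abs_recurrence_ge (by linarith) (hrec k)
    nlinarith [abs_nonneg (u (k + 1))]

theorem pow_mul_abs_le_abs_of_recurrence (hP : 1 ≤ P)
    (hrec : ∀ k, u (k + 2) = 2 * P * u (k + 1) - u k) (h01 : |u 0| ≤ |u 1|) (k : ℕ) :
    (2 * P - 1) ^ k * |u 1| ≤ |u (k + 1)| := by
  induction k with
  | zero => simp
  | succ k ih =>
    have hmono := monotone_abs_of_recurrence hP hrec h01 k.le_succ
    have hstep := abs_recurrence_ge (by linarith) (hrec k)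
    calc (2 * P - 1) ^ (k + 1) * |u 1| = (2 * P - 1) * ((2 * P - 1) ^ k * |u 1|) := by ring
      _ ≤ (2 * P - 1) * |u (k + 1)| := mul_le_mul_of_nonneg_left ih (by linarith)
      _ ≤ |u (k + 2)| := by linarith

theorem abs_le_pow_mul_abs_of_recurrence (hP : 1 ≤ P)
    (hrec : ∀ k, u (k + 2) = 2 * P * u (k + 1) - u k) (h01 : |u 0| ≤ |u 1|) (k : ℕ) :
    |u (k + 1)| ≤ (2 * P + 1) ^ k * |u 1| := by
  induction k with
  | zero => simp
  | succ k ih =>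
    have hmono := monotone_abs_of_recurrence hP hrec h01 k.le_succ
    have hstep := abs_recurrence_le (by linarith) (hrec k)
    calc |u (k + 2)| ≤ (2 * P + 1) * |u (k + 1)| := by linarith
      _ ≤ (2 * P + 1) * ((2 * P + 1) ^ k * |u 1|) := mul_le_mul_of_nonneg_left ih (by linarith)
      _ = (2 * P + 1) ^ (k + 1) * |u 1| := by ring

theorem sub_le_abs_mul_add_mul {a b x y : R} (ha : 0 ≤ a) (hb : 0 ≤ b) (hx : |x| = 1)
    (hy : |y| = 1) : b - a ≤ |a * x + b * y| ∧ |a * x + b * y| ≤ b + a := by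
  have hax : |a * x| = a := by rw [abs_mul, hx, mul_one, abs_of_nonneg ha]
  have hby : |b * y| = b := by rw [abs_mul, hy, mul_one, abs_of_nonneg hb]
  constructor
  · have h := abs_sub_abs_le_abs_sub (b * y) (-(a * x))
    rwa [abs_neg, hax, hby, sub_neg_eq_add, add_comm] at h
  · have h := abs_add_le (a * x) (b * y)
    rwa [hax, hby, add_comm a] at h

theorem abs_bounds_of_recurrence {C x y : R} (hP : 1 ≤ P) (hPC : P + 1 ≤ C) (hx : |x| = 1)
    (hy : |y| = 1) (hu0 : u 0 = x) (hu1 : u 1 = P * x + C * y)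
    (hrec : ∀ k, u (k + 2) = 2 * P * u (k + 1) - u k) :
    Monotone (fun k => |u k|) ∧ (∀ k, (2 * P - 1) ^ k * (C - P) ≤ |u (k + 1)|) ∧
      ∀ k, |u (k + 1)| ≤ (2 * P + 1) ^ k * (C + P) := by
  obtain ⟨hlo, hhi⟩ : C - P ≤ |u 1| ∧ |u 1| ≤ C + P :=
    hu1 ▸ sub_le_abs_mul_add_mul (by linarith) (by linarith) hx hy
  have h01 : |u 0| ≤ |u 1| := by rw [hu0, hx]; linarith
  refine ⟨monotone_abs_of_recurrence hP hrec h01, fun k => ?_, fun k => ?_⟩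
  · exact (mul_le_mul_of_nonneg_left hlo (pow_nonneg (by linarith) k)).trans
      (pow_mul_abs_le_abs_of_recurrence hP hrec h01 k)
  · exact (abs_le_pow_mul_abs_of_recurrence hP hrec h01 k).trans
      (mul_le_mul_of_nonneg_left hhi (pow_nonneg (by linarith) k))

theorem abs_lt_abs_of_geom_bounds {x y : ℕ → R} {q Q d D : R} {r : ℕ} (hq : 0 < q) (hQ : 0 ≤ Q)
    (hQq : Q ≤ q ^ r) (hDd : D < q ^ (r + 1) * d) (hx0 : |x 0| < q * d)
    (hx : ∀ k, |x (k + 1)| ≤ Q ^ k * D) (hy : ∀ k, q ^ k * d ≤ |y (k + 1)|) (i : ℕ) :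
    |x i| < |y (r * i + 2)| := by
  cases i with
  | zero => simpa using hx0.trans_le (by simpa using hy 1)
  | succ k =>
    have hD : 0 ≤ D := by simpa using (abs_nonneg _).trans (hx 0)
    calc |x (k + 1)| ≤ Q ^ k * D := hx k
      _ ≤ (q ^ r) ^ k * D := mul_le_mul_of_nonneg_right (pow_le_pow_left₀ hQ hQq k) hD
      _ < (q ^ r) ^ k * (q ^ (r + 1) * d) := mul_lt_mul_of_pos_left hDd (by positivity)
      _ = q ^ (r * (k + 1) + 1) * d := by ring
      _ ≤ |y (r * (k + 1) + 2)| := hy _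

end Recurrence

structure DiophantineRoots (A B C S T : ℤ) : Prop where
  A_pos : 0 < A
  A_lt_B : A < B
  B_lt_C : B < C
  S_pos : 0 < S
  T_pos : 0 < T
  sq_S : A * C + 1 = S ^ 2
  sq_T : B * C + 1 = T ^ 2

namespace DiophantineRoots

variable {A B C S T : ℤ}

theorem S_lt_T (h : DiophantineRoots A B C S T) : S < T := by
  have := h.sq_S; have := h.sq_T; have := h.T_pos
  nlinarith [h.A_lt_B, h.B_lt_C, h.A_pos]

theorem T_lt_C (h : DiophantineRoots A B C S T) : T < C := by
  have := h.sq_T; have := h.T_pos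
  nlinarith [h.A_lt_B, h.B_lt_C, h.A_pos]

/-- `S = 2` would force `(A, B, C) = (1, 2, 3)`, but `2 * 3 + 1` is not a square. -/
theorem three_le_S (h : DiophantineRoots A B C S T) : 3 ≤ S := by
  obtain ⟨hA, hAB, hBC, hS, hT, hS2, hT2⟩ := h
  have h2 : 2 ≤ S := by nlinarith
  by_contra h3
  have hS : S = 2 := by omega
  subst hS
  have hA1 : A = 1 := by nlinarith
  subst hA1
  have hB : B = 2 := by omega
  have hC : C = 3 := by omega
  subst hB hC
  have : T < 3 := by nlinarith
  interval_cases T <;> omega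

theorem add_lt_sq_mul_sub (h : DiophantineRoots A B C S T) :
    C + S < (2 * T - 1) ^ 2 * (C - T) := by
  have := h.S_lt_T; have := h.T_lt_C; have := h.sq_T; have := h.sq_S
  nlinarith [h.A_lt_B, h.B_lt_C, h.A_pos]

theorem C_le_A_mul_C (h : DiophantineRoots A B C S T) : C ≤ A * C := by
  nlinarith [h.A_pos, h.A_lt_B, h.B_lt_C]

theorem add_one_le_sq (h : DiophantineRoots A B C S T) : 2 * T + 1 ≤ (2 * S - 1) ^ 2 := by
  nlinarith [h.T_lt_C, h.sq_S, h.C_le_A_mul_C, sq_nonneg (S - 1)]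

theorem add_lt_cube_mul_sub (h : DiophantineRoots A B C S T) :
    C + T < (2 * S - 1) ^ 3 * (C - S) := by
  have hS := h.three_le_S
  have hcube : 5 * C + 5 ≤ (2 * S - 1) ^ 3 := by
    nlinarith [h.sq_S, h.C_le_A_mul_C, mul_nonneg (sub_nonneg.2 hS) (sq_nonneg S)]
  nlinarith [h.S_lt_T, h.T_lt_C]

end DiophantineRoots

theorem v_eq_w_index_relation_general
    (A B C S T : ℤ) (lam ε δ : ℤ)
    (hA : 0 < A) (hAB : A < B) (hBC : B < C)
    (hS : 0 < S) (hT : 0 < T)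
    (hS2 : A * C + 1 = S ^ 2) (hT2 : B * C + 1 = T ^ 2)
    (hlam : lam = 1 ∨ lam = -1)
    (hε : ε = 1 ∨ ε = -1) (hδ : δ = 1 ∨ δ = -1)
    (v w : ℕ → ℤ)
    (hv0 : v 0 = lam) (hv1 : v 1 = S * lam + C * ε)
    (hv : ∀ m : ℕ, v (m + 2) = 2 * S * v (m + 1) - v m)
    (hw0 : w 0 = lam) (hw1 : w 1 = T * lam + C * δ)
    (hw : ∀ n : ℕ, w (n + 2) = 2 * T * w (n + 1) - w n)
    (m n : ℕ) (heq : v (2 * m) = w (2 * n)) :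
    n ≤ m ∧ m ≤ 2 * n := by
  have h : DiophantineRoots A B C S T := ⟨hA, hAB, hBC, hS, hT, hS2, hT2⟩
  have hST := h.S_lt_T
  have hTC := h.T_lt_C
  have hlam1 : |lam| = 1 := (abs_eq zero_le_one).2 hlam
  obtain ⟨hv_mono, hv_lo, hv_hi⟩ := abs_bounds_of_recurrence hS (by omega) hlam1
    ((abs_eq zero_le_one).2 hε) hv0 hv1 hv
  obtain ⟨hw_mono, hw_lo, hw_hi⟩ := abs_bounds_of_recurrence hT (by omega) hlam1
    ((abs_eq zero_le_one).2 hδ) hw0 hw1 hw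
  have habs : |v (2 * m)| = |w (2 * n)| := by rw [heq]
  constructor
  · by_contra! hnm
    have hlt := abs_lt_abs_of_geom_bounds (r := 1) (by omega) (by omega) (by rw [pow_one]; omega)
      h.add_lt_sq_mul_sub (by rw [hv0, hlam1]; nlinarith) hv_hi hw_lo (2 * m)
    have hle : |w (1 * (2 * m) + 2)| ≤ |w (2 * n)| := hw_mono (by omega)
    omega
  · by_contra! hmn
    have hlt := abs_lt_abs_of_geom_bounds (r := 2) (by omega) (by omega) h.add_one_le_sq
      h.add_lt_cube_mul_sub (by rw [hw0, hlam1]; nlinarith) hw_hi hv_lo (2 * n)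
    have hle : |v (2 * (2 * n) + 2)| ≤ |v (2 * m)| := hv_mono (by omega)
    omega

/-- If `v (2*m) = w (2*n)` then `n ≤ m ≤ 2*n`. -/
theorem v_eq_w_index_relation
    (A B C S T : ℤ) (lam ε δ : ℤ)
    (hA : 0 < A) (hAB : A < B) (hBC : B < C)
    (hR : ∃ R : ℤ, A * B + 1 = R ^ 2)
    (hS : 0 < S) (hT : 0 < T)
    (hS2 : A * C + 1 = S ^ 2) (hT2 : B * C + 1 = T ^ 2)
    (hlam : lam = 1 ∨ lam = -1)
    (hε : ε = 1 ∨ ε = -1) (hδ : δ = 1 ∨ δ = -1)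
    (v w : ℕ → ℤ)
    (hv0 : v 0 = lam) (hv1 : v 1 = S * lam + C * ε)
    (hv : ∀ m : ℕ, v (m + 2) = 2 * S * v (m + 1) - v m)
    (hw0 : w 0 = lam) (hw1 : w 1 = T * lam + C * δ)
    (hw : ∀ n : ℕ, w (n + 2) = 2 * T * w (n + 1) - w n)
    (m n : ℕ) (heq : v (2 * m) = w (2 * n)) :
    n ≤ m ∧ m ≤ 2 * n :=
  v_eq_w_index_relation_general A B C S T lam ε δ hA hAB hBC hS hT hS2 hT2 hlam hε hδ v w hv0 hv1 hv
    hw0 hw1 hw m n heq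
end

section
/- With the sequences $(v_m)$ and $(w_n)$ as in the context, assume $B \ge 8$. If $v_{2m} = w_{2n}$ holds for integers $m \ge 3$ and $n \ge 2$, then $m > 0.48\, B^{-1/2} C^{1/2}$. -/
/-!
Suppose `m ≤ 0.48 √(C / B)`, i.e. `625 B m² ≤ 144 C`. Comparing the growth rates of the two
recurrences gives `n ≤ m`. Modulo `4C²` one has `v_{2k} ≡ λ + 2C (Aλk² + Sεk)`, and likewise for
`w`, so `Am² + σSm ≡ Bn² + τTn (mod 2C)` with `σ = λε`, `τ = λδ`; the size bounds make the two sides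
differ by less than `2C`, hence they are equal. Squaring `τTn = e + σSm`, where `e = Am² - Bn²`,
gives `e (C + e + 2σSm) = n² - m²`. If `e = 0` then `m = n` and `A = B`. Otherwise
`k = C + e + 2σSm` satisfies `|k| ≤ m²`, which is impossible for `σ = 1` since then `k ≥ C - Bn²`;
for `σ = -1` the identity `(C - Am² - Bn² - k)² = 4m² (ABn² + Ak + 1)` has a left side of order
`(0.51 C)²` and a right side below `0.24 C²`.
-/

namespace DiophantineTriple

section Recurrence

variable {s : ℤ} {u : ℕ → ℤ}

theorem abs_add_two_le (hs : 0 ≤ s) (hu : ∀ k, u (k + 2) = 2 * s * u (k + 1) - u k) (k : ℕ) :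
    |u (k + 2)| ≤ 2 * s * |u (k + 1)| + |u k| := by
  have h := abs_sub (2 * s * u (k + 1)) (u k)
  rwa [abs_mul, abs_of_nonneg (by positivity : (0 : ℤ) ≤ 2 * s), ← hu] at h

theorem le_abs_add_two (hs : 0 ≤ s) (hu : ∀ k, u (k + 2) = 2 * s * u (k + 1) - u k) (k : ℕ) :
    2 * s * |u (k + 1)| - |u k| ≤ |u (k + 2)| := by
  have h := abs_sub_abs_le_abs_sub (2 * s * u (k + 1)) (u k)
  rwa [abs_mul, abs_of_nonneg (by positivity : (0 : ℤ) ≤ 2 * s), ← hu] at h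

theorem abs_le_abs_succ (hs : 1 ≤ s) (hu : ∀ k, u (k + 2) = 2 * s * u (k + 1) - u k)
    (h01 : |u 0| ≤ |u 1|) (k : ℕ) : |u k| ≤ |u (k + 1)| := by
  induction k with
  | zero => exact h01
  | succ k ih =>
    have := le_abs_add_two (by linarith) hu k
    nlinarith [abs_nonneg (u (k + 1))]

theorem abs_succ_le_pow_mul (hs : 1 ≤ s) (hu : ∀ k, u (k + 2) = 2 * s * u (k + 1) - u k)
    (h01 : |u 0| ≤ |u 1|) (k : ℕ) : |u (k + 1)| ≤ (2 * s + 1) ^ k * |u 1| := by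
  induction k with
  | zero => simp
  | succ k ih =>
    calc |u (k + 2)| ≤ (2 * s + 1) * |u (k + 1)| := by
          linarith [abs_add_two_le (by linarith) hu k, abs_le_abs_succ hs hu h01 k]
      _ ≤ (2 * s + 1) * ((2 * s + 1) ^ k * |u 1|) := by gcongr
      _ = (2 * s + 1) ^ (k + 1) * |u 1| := by ring

theorem pow_mul_le_abs_succ (hs : 1 ≤ s) (hu : ∀ k, u (k + 2) = 2 * s * u (k + 1) - u k)
    (h01 : |u 0| ≤ |u 1|) (k : ℕ) : (2 * s - 1) ^ k * |u 1| ≤ |u (k + 1)| := by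
  induction k with
  | zero => simp
  | succ k ih =>
    calc (2 * s - 1) ^ (k + 1) * |u 1| = (2 * s - 1) * ((2 * s - 1) ^ k * |u 1|) := by ring
      _ ≤ (2 * s - 1) * |u (k + 1)| := by gcongr; linarith
      _ ≤ |u (k + 2)| := by
          linarith [le_abs_add_two (by linarith) hu k, abs_le_abs_succ hs hu h01 k]

theorem add_four_eq (hu : ∀ k, u (k + 2) = 2 * s * u (k + 1) - u k) (k : ℕ) :
    u (k + 4) = (4 * s ^ 2 - 2) * u (k + 2) - u k := by
  rw [hu (k + 2), hu (k + 1), hu k]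
  ring

end Recurrence

theorem index_le_of_eq {S T : ℤ} {v w : ℕ → ℤ} (hS : 1 ≤ S) (hST : S < T)
    (hv : ∀ k, v (k + 2) = 2 * S * v (k + 1) - v k) (hw : ∀ k, w (k + 2) = 2 * T * w (k + 1) - w k)
    (hv01 : |v 0| ≤ |v 1|) (hv1 : |v 1| < (2 * S + 1) ^ 2)
    (hw01 : |w 0| ≤ |w 1|) (hw1 : 1 ≤ |w 1|) {i j : ℕ} (h : v (i + 1) = w (j + 1)) :
    j ≤ i + 1 := by
  by_contra! hij
  have hT : 1 ≤ T := by linarith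
  have := calc (2 * S + 1) ^ (i + 2) ≤ (2 * T - 1) ^ (i + 2) := by gcongr; linarith
    _ ≤ (2 * T - 1) ^ j := pow_le_pow_right₀ (by linarith) hij
    _ ≤ (2 * T - 1) ^ j * |w 1| := le_mul_of_one_le_right (pow_nonneg (by linarith) _) hw1
    _ ≤ |v (i + 1)| := h ▸ pow_mul_le_abs_succ hT hw hw01 j
    _ ≤ (2 * S + 1) ^ i * |v 1| := abs_succ_le_pow_mul hS hv hv01 i
    _ < (2 * S + 1) ^ i * (2 * S + 1) ^ 2 := by gcongr
  rw [← pow_add] at this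
  exact this.false

theorem even_modEq {A C S lam ε : ℤ} {v : ℕ → ℤ} (hS2 : A * C + 1 = S ^ 2) (hv0 : v 0 = lam)
    (hv1 : v 1 = S * lam + C * ε) (hv : ∀ k, v (k + 2) = 2 * S * v (k + 1) - v k) (k : ℕ) :
    v (2 * k) ≡ lam + 2 * C * (A * lam * k ^ 2 + S * ε * k) [ZMOD 4 * C ^ 2] := by
  induction k using Nat.twoStepInduction with
  | zero => simp [hv0]
  | one =>
    refine Int.modEq_iff_dvd.2 ⟨0, ?_⟩
    rw [hv 0, hv1, hv0]
    linear_combination 2 * lam * hS2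
  | more k ih0 ih1 =>
    rw [show 2 * (k + 2) = 2 * k + 4 by ring, add_four_eq hv]
    rw [show 2 * (k + 1) = 2 * k + 2 by ring] at ih1
    refine ((ih1.mul_left _).sub ih0).trans
      (Int.modEq_iff_dvd.2 ⟨-2 * A * (A * lam * (k + 1) ^ 2 + S * ε * (k + 1)), ?_⟩)
    push_cast
    linear_combination
      4 * (lam + 2 * C * (A * lam * ((k : ℤ) + 1) ^ 2 + S * ε * ((k : ℤ) + 1))) * hS2

theorem modEq_of_even_eq {A B C S T lam ε δ : ℤ} {v w : ℕ → ℤ} (hC : C ≠ 0) (hlam : lam ^ 2 = 1)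
    (hS2 : A * C + 1 = S ^ 2) (hT2 : B * C + 1 = T ^ 2)
    (hv0 : v 0 = lam) (hv1 : v 1 = S * lam + C * ε) (hv : ∀ k, v (k + 2) = 2 * S * v (k + 1) - v k)
    (hw0 : w 0 = lam) (hw1 : w 1 = T * lam + C * δ) (hw : ∀ k, w (k + 2) = 2 * T * w (k + 1) - w k)
    {m n : ℕ} (heq : v (2 * m) = w (2 * n)) :
    A * m ^ 2 + lam * ε * S * m ≡ B * n ^ 2 + lam * δ * T * n [ZMOD 2 * C] := by
  have h := ((even_modEq hS2 hv0 hv1 hv m).symm.trans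
    (heq ▸ even_modEq hT2 hw0 hw1 hw n)).add_left_cancel' lam
  rw [show 4 * C ^ 2 = 2 * C * (2 * C) by ring] at h
  have := (h.mul_left_cancel' (by positivity)).mul_left lam
  convert this using 1
  · linear_combination (-A * m ^ 2) * hlam
  · linear_combination (-B * n ^ 2) * hlam

theorem sub_mul_eq_sub_of_eq {R : Type*} [CommRing R] {A B C S T m n σ τ : R}
    (hS2 : A * C + 1 = S ^ 2) (hT2 : B * C + 1 = T ^ 2) (hσ : σ ^ 2 = 1) (hτ : τ ^ 2 = 1)
    (h : A * m ^ 2 + σ * S * m = B * n ^ 2 + τ * T * n) :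
    (A * m ^ 2 - B * n ^ 2) * (C + (A * m ^ 2 - B * n ^ 2) + 2 * σ * S * m) = n ^ 2 - m ^ 2 := by
  linear_combination (A * m ^ 2 - B * n ^ 2 + σ * S * m + τ * T * n) * h + m ^ 2 * hS2
    - n ^ 2 * hT2 - S ^ 2 * m ^ 2 * hσ + T ^ 2 * n ^ 2 * hτ

section Bounds

variable {A B C S T m n : ℤ}

theorem mul_sq_le_of_small (hA : 0 ≤ A) (hAB : A ≤ B) (hn : 0 ≤ n) (hnm : n ≤ m)
    (hsmall : 625 * (B * m ^ 2) ≤ 144 * C) : 625 * (A * n ^ 2) ≤ 144 * C := by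
  have : A * n ^ 2 ≤ B * m ^ 2 :=
    mul_le_mul hAB (pow_le_pow_left₀ hn hnm 2) (sq_nonneg n) (hA.trans hAB)
  linarith

theorem sq_le_of_small (hB : 8 ≤ B) (hsmall : 625 * (B * m ^ 2) ≤ 144 * C) :
    625 * m ^ 2 ≤ 18 * C := by
  nlinarith [sq_nonneg m]

theorem two_mul_mul_lt_of_small (hB : 8 ≤ B) (hC : 2 ≤ C)
    (hT2 : B * C + 1 = T ^ 2) (hsmall : 625 * (B * m ^ 2) ≤ 144 * C) : 2 * (T * m) < C := by
  have hm2 := sq_le_of_small hB hsmall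
  have hsq : (2 * (T * m)) ^ 2 < C ^ 2 := by
    nlinarith [mul_le_mul_of_nonneg_left hsmall (by linarith : (0 : ℤ) ≤ C)]
  exact lt_of_pow_lt_pow_left₀ 2 (by linarith) hsq

theorem eq_of_modEq_of_small {σ τ : ℤ} (hA : 0 ≤ A) (hAB : A ≤ B) (hB : 8 ≤ B) (hC : 2 ≤ C)
    (hS : 0 ≤ S) (hST : S ≤ T) (hT2 : B * C + 1 = T ^ 2) (hσ : σ = 1 ∨ σ = -1)
    (hτ : τ = 1 ∨ τ = -1) (hn : 0 ≤ n) (hnm : n ≤ m) (hsmall : 625 * (B * m ^ 2) ≤ 144 * C)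
    (h : A * m ^ 2 + σ * S * m ≡ B * n ^ 2 + τ * T * n [ZMOD 2 * C]) :
    A * m ^ 2 + σ * S * m = B * n ^ 2 + τ * T * n := by
  have hm : 0 ≤ m := hn.trans hnm
  have hAm := mul_sq_le_of_small hA hAB hm le_rfl hsmall
  have hBn := mul_sq_le_of_small (by linarith) le_rfl hn hnm hsmall
  have hTm := two_mul_mul_lt_of_small hB hC hT2 hsmall
  have hSm : S * m ≤ T * m := mul_le_mul_of_nonneg_right hST hm
  have hTn : T * n ≤ T * m := mul_le_mul_of_nonneg_left hnm (hS.trans hST)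
  have : 0 ≤ A * m ^ 2 := by positivity
  have : 0 ≤ B * n ^ 2 := by nlinarith
  have : 0 ≤ S * m := by positivity
  have : 0 ≤ T * n := by nlinarith
  have hlt : |B * n ^ 2 + τ * T * n - (A * m ^ 2 + σ * S * m)| < 2 * C := by
    rw [abs_lt]
    rcases hσ with rfl | rfl <;> rcases hτ with rfl | rfl <;> constructor <;> linarith
  exact (sub_eq_zero.1 (Int.eq_zero_of_abs_lt_dvd (Int.modEq_iff_dvd.1 h) hlt)).symm

theorem ne_of_small {σ τ : ℤ} (hA : 0 < A) (hAB : A < B) (hB : 8 ≤ B) (hC : 6 ≤ C) (hS : 0 ≤ S)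
    (hS2 : A * C + 1 = S ^ 2) (hT2 : B * C + 1 = T ^ 2) (hσ : σ = 1 ∨ σ = -1) (hτ : τ ^ 2 = 1)
    (hm : 0 < m) (hn : 0 ≤ n) (hnm : n ≤ m) (hsmall : 625 * (B * m ^ 2) ≤ 144 * C) :
    A * m ^ 2 + σ * S * m ≠ B * n ^ 2 + τ * T * n := by
  intro h
  have hkey := sub_mul_eq_sub_of_eq hS2 hT2 (by rcases hσ with rfl | rfl <;> norm_num) hτ h
  have hAm := mul_sq_le_of_small hA.le hAB.le hm.le le_rfl hsmall
  have hBn := mul_sq_le_of_small (by linarith) le_rfl hn hnm hsmall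
  have hm2 := sq_le_of_small hB hsmall
  have hAm0 : 0 ≤ A * m ^ 2 := by positivity
  obtain he | he := eq_or_ne (A * m ^ 2 - B * n ^ 2) 0
  · rw [he, zero_mul, eq_comm, sub_eq_zero] at hkey
    obtain rfl : n = m := (pow_left_inj₀ hn hm.le two_ne_zero).1 hkey
    nlinarith
  set k := C + (A * m ^ 2 - B * n ^ 2) + 2 * σ * S * m with hk_def
  have hk : |k| ≤ m ^ 2 := calc
    |k| ≤ |A * m ^ 2 - B * n ^ 2| * |k| := le_mul_of_one_le_left (abs_nonneg _) (Int.one_le_abs he)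
    _ = m ^ 2 - n ^ 2 := by rw [← abs_mul, hkey, abs_sub_comm, abs_of_nonneg (by nlinarith)]
    _ ≤ m ^ 2 := by nlinarith
  obtain ⟨hk1, hk2⟩ := abs_le.1 hk
  have hSm : 0 ≤ S * m := by positivity
  rcases hσ with rfl | rfl
  · linarith
  have hsq : (C - A * m ^ 2 - B * n ^ 2 - k) ^ 2
      = 4 * (A * m ^ 2) * (B * n ^ 2) + 4 * (A * m ^ 2) * k + 4 * m ^ 2 := by
    rw [hk_def]; linear_combination (-4 * m ^ 2) * hS2
  have hXlow : 319 * C ≤ 625 * (C - A * m ^ 2 - B * n ^ 2 - k) := by linarith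
  nlinarith [mul_self_le_mul_self (by linarith) hXlow,
    mul_le_mul hAm hBn (by nlinarith) (by linarith),
    mul_le_mul_of_nonneg_left hk2 hAm0, mul_le_mul hAm hm2 (by positivity) (by linarith),
    mul_le_mul_of_nonneg_left hC (by linarith : (0 : ℤ) ≤ C)]

end Bounds

theorem mul_sq_le_of_le_rpow {b c x : ℝ} (hb : 0 < b) (hc : 0 ≤ c) (hx : 0 ≤ x)
    (h : x ≤ 0.48 * b ^ (-(1 : ℝ) / 2) * c ^ ((1 : ℝ) / 2)) : 625 * (b * x ^ 2) ≤ 144 * c := by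
  rw [neg_div, Real.rpow_neg hb.le, ← Real.sqrt_eq_rpow, ← Real.sqrt_eq_rpow] at h
  have hsb : 0 < √b := Real.sqrt_pos.2 hb
  have h' : x * √b ≤ 0.48 * √c := by
    calc x * √b ≤ 0.48 * (√b)⁻¹ * √c * √b := by gcongr
      _ = 0.48 * √c := by field_simp
  have := pow_le_pow_left₀ (by positivity) h' 2
  rw [mul_pow, mul_pow, Real.sq_sqrt hb.le, Real.sq_sqrt hc] at this
  linarith

theorem abs_mul_add_mul_mem_Icc {s c lam ε : ℤ} (hlam : lam = 1 ∨ lam = -1) (hε : ε = 1 ∨ ε = -1)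
    (hs : 0 ≤ s) (hsc : s ≤ c) : |s * lam + c * ε| ∈ Set.Icc (c - s) (c + s) := by
  rcases abs_cases (s * lam + c * ε) with ⟨h, h'⟩ | ⟨h, h'⟩ <;> rw [h] <;>
    rcases hlam with rfl | rfl <;> rcases hε with rfl | rfl <;> constructor <;> linarith

theorem le_of_even_eq {A C S T lam ε δ : ℤ} {v w : ℕ → ℤ} (hA : 0 < A) (hS : 0 < S)
    (hST : S < T) (hTC : T < C) (hS2 : A * C + 1 = S ^ 2) (hlam : lam = 1 ∨ lam = -1)
    (hε : ε = 1 ∨ ε = -1) (hδ : δ = 1 ∨ δ = -1)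
    (hv0 : v 0 = lam) (hv1 : v 1 = S * lam + C * ε) (hv : ∀ k, v (k + 2) = 2 * S * v (k + 1) - v k)
    (hw0 : w 0 = lam) (hw1 : w 1 = T * lam + C * δ) (hw : ∀ k, w (k + 2) = 2 * T * w (k + 1) - w k)
    {m n : ℕ} (hm : 0 < m) (heq : v (2 * m) = w (2 * n)) : n ≤ m := by
  by_contra! hmn
  have hlam1 : |lam| = 1 := Int.isUnit_iff_abs_eq.1 (Int.isUnit_iff.2 hlam)
  obtain ⟨hv1l, hv1u⟩ := hv1 ▸ abs_mul_add_mul_mem_Icc hlam hε hS.le (hST.trans hTC).le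
  obtain ⟨hw1l, -⟩ := hw1 ▸ abs_mul_add_mul_mem_Icc hlam hδ (hS.trans hST).le hTC.le
  rw [show 2 * m = 2 * m - 1 + 1 by omega, show 2 * n = 2 * n - 1 + 1 by omega] at heq
  have := index_le_of_eq hS hST hv hw (by rw [hv0, hlam1]; linarith) (by nlinarith)
    (by rw [hw0, hlam1]; linarith) (by linarith) heq
  omega

end DiophantineTriple

open DiophantineTriple

theorem v_eq_w_lower_bound_m_general
    (A B C S T : ℤ) (lam ε δ : ℤ)
    (hA : 0 < A) (hAB : A < B)
    (hS : 0 < S) (hT : 0 < T)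
    (hS2 : A * C + 1 = S ^ 2) (hT2 : B * C + 1 = T ^ 2)
    (hlam : lam = 1 ∨ lam = -1)
    (hε : ε = 1 ∨ ε = -1) (hδ : δ = 1 ∨ δ = -1)
    (hB8 : 8 ≤ B)
    (v w : ℕ → ℤ)
    (hv0 : v 0 = lam) (hv1 : v 1 = S * lam + C * ε)
    (hv : ∀ m : ℕ, v (m + 2) = 2 * S * v (m + 1) - v m)
    (hw0 : w 0 = lam) (hw1 : w 1 = T * lam + C * δ)
    (hw : ∀ n : ℕ, w (n + 2) = 2 * T * w (n + 1) - w n)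
    (m n : ℕ) (hm : 3 ≤ m)
    (heq : v (2 * m) = w (2 * n)) :
    (m : ℝ) > 0.48 * (B : ℝ) ^ (-(1 : ℝ) / 2) * (C : ℝ) ^ ((1 : ℝ) / 2) := by
  by_contra hcon
  have hC0 : 0 ≤ C := by nlinarith
  have hsmall : 625 * (B * (m : ℤ) ^ 2) ≤ 144 * C := by
    exact_mod_cast mul_sq_le_of_le_rpow (by exact_mod_cast (by linarith : (0 : ℤ) < B))
      (by exact_mod_cast hC0) m.cast_nonneg (not_lt.1 hcon)
  have hm1 : (1 : ℤ) ≤ m := by exact_mod_cast (by omega : 1 ≤ m)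
  have hBC : 4 * B ≤ C := by
    nlinarith [le_mul_of_one_le_right (by linarith : 0 ≤ B) (one_le_pow₀ hm1 : (1 : ℤ) ≤ m ^ 2)]
  have hST : S < T := by nlinarith
  have hTC : T < C := by nlinarith
  have hnm : n ≤ m :=
    le_of_even_eq hA hS hST hTC hS2 hlam hε hδ hv0 hv1 hv hw0 hw1 hw (by omega) heq
  have hσ := Int.isUnit_iff.1 ((Int.isUnit_iff.2 hlam).mul (Int.isUnit_iff.2 hε))
  have hτ := Int.isUnit_iff.1 ((Int.isUnit_iff.2 hlam).mul (Int.isUnit_iff.2 hδ))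
  have hmod := modEq_of_even_eq (by linarith) (Int.isUnit_sq (Int.isUnit_iff.2 hlam)) hS2 hT2
    hv0 hv1 hv hw0 hw1 hw heq
  have hnm' : (n : ℤ) ≤ m := by exact_mod_cast hnm
  exact ne_of_small hA hAB hB8 (by linarith) hS.le hS2 hT2 hσ
    (Int.isUnit_sq (Int.isUnit_iff.2 hτ)) (by linarith) n.cast_nonneg hnm' hsmall
    (eq_of_modEq_of_small hA.le hAB.le hB8 (by linarith) hS.le hST.le hT2 hσ hτ n.cast_nonneg hnm'
      hsmall hmod)

/-- If `B ≥ 8` and `v (2*m) = w (2*n)` with `m ≥ 3`, `n ≥ 2`,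
then `m > 0.48 * B^(-1/2) * C^(1/2)`. -/
theorem v_eq_w_lower_bound_m
    (A B C S T : ℤ) (lam ε δ : ℤ)
    (hA : 0 < A) (hAB : A < B) (hBC : B < C)
    (hR : ∃ R : ℤ, A * B + 1 = R ^ 2)
    (hS : 0 < S) (hT : 0 < T)
    (hS2 : A * C + 1 = S ^ 2) (hT2 : B * C + 1 = T ^ 2)
    (hlam : lam = 1 ∨ lam = -1)
    (hε : ε = 1 ∨ ε = -1) (hδ : δ = 1 ∨ δ = -1)
    (hB8 : 8 ≤ B)
    (v w : ℕ → ℤ)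
    (hv0 : v 0 = lam) (hv1 : v 1 = S * lam + C * ε)
    (hv : ∀ m : ℕ, v (m + 2) = 2 * S * v (m + 1) - v m)
    (hw0 : w 0 = lam) (hw1 : w 1 = T * lam + C * δ)
    (hw : ∀ n : ℕ, w (n + 2) = 2 * T * w (n + 1) - w n)
    (m n : ℕ) (hm : 3 ≤ m) (hn : 2 ≤ n)
    (heq : v (2 * m) = w (2 * n)) :
    (m : ℝ) > 0.48 * (B : ℝ) ^ (-(1 : ℝ) / 2) * (C : ℝ) ^ ((1 : ℝ) / 2) :=
  v_eq_w_lower_bound_m_general A B C S T lam ε δ hA hAB hS hT hS2 hT2 hlam hε hδ hB8 v w hv0 hv1 hv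
    hw0 hw1 hw m n hm heq
end

section
/- Let $A,B,C$ be positive integers with $A<B<C$ and $B \ge 8$, and let $S,T$ be the positive integers with $AC+1=S^2$ and $BC+1=T^2$. Let $\lambda \in \{1,-1\}$, and let $m, n$ be integers with $m \ge 3$, $n \ge 2$, and $n \le m$. If $Am^2 + \lambda S m \equiv Bn^2 + \lambda T n \pmod{4C}$, then $m > 0.48\, B^{-1/2} C^{1/2}$. -/
/-!
Put `D = (B n² + λ T n) - (A m² + λ S m)`, so that `4C ∣ D`; it suffices to show
`C ≤ B m²` or `C ≤ 2 T m`, since the latter squares to `C² ≤ 4 (B C + 1) m²`, i.e. roughly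
`B m² ≥ C / 4 > 0.48² C`.

If `D ≠ 0` then `4C ≤ |D| ≤ B m² + T m`. If `D = 0`, eliminating `A C` and `B C` through
`S² = A C + 1` and `T² = B C + 1` gives `(B n² - A m²)(C + λ (T n + S m)) = m² - n²`, whose first
factor cannot vanish; hence `C + λ (T n + S m) ≤ m² - n²`. For `λ = 1` this forces `C ≤ m²`.
For `λ = -1` either `T < m + n ≤ 2m`, so that `B C < T² ≤ 4 m²`, or `T ≥ m + n`, and then
`m² - n² ≤ T (m - n)` gives `C ≤ S m + T m ≤ 2 T m`.
-/

open Real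

lemma lt_of_mul_lt_mul_sq {b c m : ℝ} (hb : 0 < b) (hc : 0 ≤ c) (hm : 0 ≤ m)
    (h : 144 * c < 625 * b * m ^ 2) :
    0.48 * b ^ (-(1 : ℝ) / 2) * c ^ ((1 : ℝ) / 2) < m := by
  have hsqrt : 0.48 * √c < m * √b := by
    refine lt_of_pow_lt_pow_left₀ 2 (by positivity) ?_
    rw [mul_pow, mul_pow, sq_sqrt hc, sq_sqrt hb.le]
    linarith
  rw [← sqrt_eq_rpow, neg_div, rpow_neg hb.le, ← sqrt_eq_rpow, mul_right_comm, ← div_eq_mul_inv,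
    div_lt_iff₀ (sqrt_pos.mpr hb)]
  exact hsqrt

lemma mul_sq_lt_of_le_two_mul {B C T m : ℤ} (hB : 0 < B) (hBC : 12 ≤ B * C)
    (hT : B * C + 1 = T ^ 2) (h : C ≤ 2 * T * m) :
    144 * C < 625 * B * m ^ 2 := by
  have hC : 0 < C := pos_of_mul_pos_right (by omega) hB.le
  have hsq : C ^ 2 ≤ 4 * (B * C + 1) * m ^ 2 := by
    rw [hT]
    nlinarith [pow_le_pow_left₀ hC.le h 2]
  nlinarith [mul_le_mul_of_nonneg_left hsq hB.le]

lemma le_of_mul_eq_of_ne_zero {a b c : ℤ} (ha : a ≠ 0) (h : a * b = c) (hc : 0 ≤ c) : b ≤ c :=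
  calc b ≤ |b| := le_abs_self b
    _ ≤ |a| * |b| := le_mul_of_one_le_left (abs_nonneg b) (Int.one_le_abs ha)
    _ = c := by rw [← abs_mul, h, abs_of_nonneg hc]

section

variable {A B C S T lam m n : ℤ}

lemma abs_sub_le_mul_sq_add_mul (hlam : lam = 1 ∨ lam = -1) (hA : 0 ≤ A) (hAB : A ≤ B)
    (hS : 0 ≤ S) (hST : S ≤ T) (hn : 0 ≤ n) (hnm : n ≤ m) :
    |(B * n ^ 2 + lam * T * n) - (A * m ^ 2 + lam * S * m)| ≤ B * m ^ 2 + T * m := by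
  have hlam' : |lam| = 1 := by rcases hlam with rfl | rfl <;> rfl
  have hm : 0 ≤ m := hn.trans hnm
  have hsq : n ^ 2 ≤ m ^ 2 := pow_le_pow_left₀ hn hnm 2
  calc |(B * n ^ 2 + lam * T * n) - (A * m ^ 2 + lam * S * m)|
      = |(B * n ^ 2 - A * m ^ 2) + lam * (T * n - S * m)| := by ring_nf
    _ ≤ |B * n ^ 2 - A * m ^ 2| + |T * n - S * m| := by
        rw [← one_mul |T * n - S * m|, ← hlam', ← abs_mul]; exact abs_add_le _ _
    _ ≤ B * m ^ 2 + T * m := by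
        gcongr
        · exact abs_sub_le_of_nonneg_of_le (mul_nonneg (by omega) (sq_nonneg n)) (by gcongr; omega)
            (mul_nonneg hA (sq_nonneg m)) (by gcongr)
        · exact abs_sub_le_of_nonneg_of_le (mul_nonneg (hS.trans hST) hn) (by gcongr; omega)
            (mul_nonneg hS hm) (by gcongr)

lemma mul_eq_sq_sub_sq_of_eq (hlam : lam ^ 2 = 1) (hS2 : A * C + 1 = S ^ 2)
    (hT2 : B * C + 1 = T ^ 2) (h : A * m ^ 2 + lam * S * m = B * n ^ 2 + lam * T * n) :
    (B * n ^ 2 - A * m ^ 2) * (C + lam * (T * n + S * m)) = m ^ 2 - n ^ 2 := by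
  linear_combination n ^ 2 * hT2 - m ^ 2 * hS2 - lam * (T * n + S * m) * h +
    (S ^ 2 * m ^ 2 - T ^ 2 * n ^ 2) * hlam

lemma add_le_sq_sub_sq_of_eq (hlam : lam ^ 2 = 1) (hAB : A < B)
    (hS2 : A * C + 1 = S ^ 2) (hT2 : B * C + 1 = T ^ 2) (hn : 0 ≤ n) (hm : 0 < m) (hnm : n ≤ m)
    (h : A * m ^ 2 + lam * S * m = B * n ^ 2 + lam * T * n) :
    C + lam * (T * n + S * m) ≤ m ^ 2 - n ^ 2 := by
  have hident := mul_eq_sq_sub_sq_of_eq hlam hS2 hT2 h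
  refine le_of_mul_eq_of_ne_zero ?_ hident (by nlinarith)
  intro hE
  rw [hE, zero_mul, eq_comm, sub_eq_zero, sq_eq_sq₀ hm.le hn] at hident
  subst hident
  nlinarith [mul_pos (sub_pos.mpr hAB) (pow_pos hm 2)]

lemma le_mul_sq_or_le_two_mul_of_eq (hlam : lam = 1 ∨ lam = -1) (hAB : A < B)
    (hB : 8 ≤ B) (hC : 0 < C) (hS : 0 ≤ S) (hST : S ≤ T) (hS2 : A * C + 1 = S ^ 2)
    (hT2 : B * C + 1 = T ^ 2) (hn : 0 ≤ n) (hm : 0 < m) (hnm : n ≤ m)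
    (h : A * m ^ 2 + lam * S * m = B * n ^ 2 + lam * T * n) :
    C ≤ B * m ^ 2 ∨ C ≤ 2 * T * m := by
  have hlam2 : lam ^ 2 = 1 := by rcases hlam with rfl | rfl <;> rfl
  have hle := add_le_sq_sub_sq_of_eq hlam2 hAB hS2 hT2 hn hm hnm h
  rcases hlam with rfl | rfl
  · left
    nlinarith [mul_nonneg (hS.trans hST) hn, mul_nonneg hS hm.le,
      mul_le_mul_of_nonneg_right (by omega : 1 ≤ B) (sq_nonneg m)]
  · by_cases hTmn : T < m + n
    · left
      have hTsq : T ^ 2 ≤ (2 * m - 1) ^ 2 := pow_le_pow_left₀ (hS.trans hST) (by omega) 2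
      nlinarith [mul_le_mul_of_nonneg_right hB hC.le,
        mul_le_mul_of_nonneg_right (by omega : 1 ≤ B) (sq_nonneg m)]
    · right
      nlinarith [mul_le_mul_of_nonneg_right (not_lt.mp hTmn) (sub_nonneg.mpr hnm),
        mul_le_mul_of_nonneg_right hST hm.le]

end

theorem congruence_lower_bound_m_general
    (A B C S T lam m n : ℤ)
    (hA : 0 < A) (hAB : A < B) (hBC : B < C) (hB8 : 8 ≤ B)
    (hS : 0 < S) (hT : 0 < T)
    (hS2 : A * C + 1 = S ^ 2) (hT2 : B * C + 1 = T ^ 2)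
    (hlam : lam = 1 ∨ lam = -1)
    (hn : 2 ≤ n) (hnm : n ≤ m)
    (hcong : A * m ^ 2 + lam * S * m ≡ B * n ^ 2 + lam * T * n [ZMOD (4 * C)]) :
    (m : ℝ) > 0.48 * (B : ℝ) ^ (-(1 : ℝ) / 2) * (C : ℝ) ^ ((1 : ℝ) / 2) := by
  have hC : 0 < C := by omega
  have hST : S ≤ T := abs_le_of_sq_le_sq' (by nlinarith) hT.le |>.2
  have hcases : C ≤ B * m ^ 2 ∨ C ≤ 2 * T * m := by
    rcases eq_or_ne (A * m ^ 2 + lam * S * m) (B * n ^ 2 + lam * T * n) with heq | hne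
    · exact le_mul_sq_or_le_two_mul_of_eq hlam hAB hB8 hC hS.le hST hS2 hT2 (by omega)
        (by omega) hnm heq
    · have h4C := Int.le_of_dvd (abs_pos.mpr (sub_ne_zero.mpr hne.symm))
        ((dvd_abs _ _).mpr hcong.dvd)
      have hbound := abs_sub_le_mul_sq_add_mul hlam hA.le hAB.le hS.le hST (by omega) hnm
      by_contra! hlt
      nlinarith
  have hkey : 144 * C < 625 * B * m ^ 2 := by
    rcases hcases with h | h
    · nlinarith
    · exact mul_sq_lt_of_le_two_mul (by omega) (by nlinarith) hT2 h
  exact lt_of_mul_lt_mul_sq (by exact_mod_cast (by omega : 0 < B)) (by exact_mod_cast hC.le)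
    (by exact_mod_cast (by omega : 0 ≤ m)) (by exact_mod_cast hkey)

/-- Congruence condition implies `m > 0.48 * B^(-1/2) * C^(1/2)`. -/
theorem congruence_lower_bound_m
    (A B C S T lam m n : ℤ)
    (hA : 0 < A) (hAB : A < B) (hBC : B < C) (hB8 : 8 ≤ B)
    (hS : 0 < S) (hT : 0 < T)
    (hS2 : A * C + 1 = S ^ 2) (hT2 : B * C + 1 = T ^ 2)
    (hlam : lam = 1 ∨ lam = -1)
    (hm : 3 ≤ m) (hn : 2 ≤ n) (hnm : n ≤ m)
    (hcong : A * m ^ 2 + lam * S * m ≡ B * n ^ 2 + lam * T * n [ZMOD (4 * C)]) :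
    (m : ℝ) > 0.48 * (B : ℝ) ^ (-(1 : ℝ) / 2) * (C : ℝ) ^ ((1 : ℝ) / 2) :=
  congruence_lower_bound_m_general A B C S T lam m n hA hAB hBC hB8 hS hT hS2 hT2 hlam hn hnm hcong
end

section
/- Let $A,B,C$ be positive integers with $A<B<C$ and $B \ge 8$, and let $S,T$ be the positive integers with $AC+1=S^2$ and $BC+1=T^2$. Let $\lambda \in \{1,-1\}$, and let $m, n$ be positive integers with $n \le m$ and $m \le 0.48\, B^{-1/2} C^{1/2}$. If $Am^2 + \lambda S m \equiv Bn^2 + \lambda T n \pmod{4C}$, then $Am^2 + \lambda S m = Bn^2 + \lambda T n$, i.e. $Am^2 - Bn^2 = \lambda(Tn - Sm)$. -/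
/-!
The bound on `m` gives `4 B m² ≤ C`, since `0.48² < 1/4`. Then `A m²` and `B n²` are at most `C / 4`,
and `(2 S m)² = 4 (A C + 1) m² ≤ C² + C < (C + 1)²`, so `|S m| ≤ C / 2`, and likewise `|T n| ≤ C / 2`.
Hence the two sides of the congruence differ by less than `4 C`, so they are equal.
-/

lemma mul_sq_le_of_le_mul_rpow {B C c m : ℝ} (hB : 0 < B) (hC : 0 ≤ C) (hm : 0 ≤ m)
    (h : m ≤ c * B ^ (-(1 : ℝ) / 2) * C ^ ((1 : ℝ) / 2)) : B * m ^ 2 ≤ c ^ 2 * C := by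
  have hsqrt : B ^ (-(1 : ℝ) / 2) * C ^ ((1 : ℝ) / 2) = √C / √B := by
    rw [neg_div, Real.rpow_neg hB.le, ← Real.sqrt_eq_rpow, ← Real.sqrt_eq_rpow, div_eq_inv_mul]
  rw [mul_assoc, hsqrt] at h
  have hsq : m ^ 2 ≤ c ^ 2 * C / B := by
    calc m ^ 2 ≤ (c * (√C / √B)) ^ 2 := pow_le_pow_left₀ hm h 2
      _ = c ^ 2 * C / B := by rw [mul_pow, div_pow, Real.sq_sqrt hC, Real.sq_sqrt hB.le]; ring
  rwa [le_div_iff₀ hB, mul_comm] at hsq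

lemma four_mul_mul_sq_le_of_le_rpow {B C m : ℤ} (hB : 0 < B) (hC : 0 ≤ C) (hm : 0 ≤ m)
    (h : (m : ℝ) ≤ 0.48 * (B : ℝ) ^ (-(1 : ℝ) / 2) * (C : ℝ) ^ ((1 : ℝ) / 2)) :
    4 * B * m ^ 2 ≤ C := by
  have hCR : (0 : ℝ) ≤ C := by exact_mod_cast hC
  have hreal := mul_sq_le_of_le_mul_rpow (by exact_mod_cast hB) hCR (by exact_mod_cast hm) h
  have : (4 * B * m ^ 2 : ℝ) ≤ C := by linarith
  exact_mod_cast this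

lemma abs_two_mul_mul_le_of_sq_eq {X C R k : ℤ} (hX : 0 < X) (hC : 0 ≤ C)
    (hR : X * C + 1 = R ^ 2) (hk : 4 * X * k ^ 2 ≤ C) : |2 * (R * k)| ≤ C := by
  have hk4 : 4 * k ^ 2 ≤ C := by nlinarith [sq_nonneg k]
  have hsq : (2 * (R * k)) ^ 2 < (C + 1) ^ 2 := by
    calc (2 * (R * k)) ^ 2 = C * (4 * X * k ^ 2) + 4 * k ^ 2 := by
          linear_combination (4 * k ^ 2) * hR.symm
      _ ≤ C * C + C := add_le_add (mul_le_mul_of_nonneg_left hk hC) hk4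
      _ < (C + 1) ^ 2 := by nlinarith
  have := abs_lt_of_sq_lt_sq hsq (by omega)
  omega

theorem congruence_to_equality_general
    (A B C S T lam m n : ℤ)
    (hA : 0 < A) (hAB : A < B) (hBC : B < C)
    (hS2 : A * C + 1 = S ^ 2) (hT2 : B * C + 1 = T ^ 2)
    (hlam : lam = 1 ∨ lam = -1)
    (hm : 0 < m) (hn : 0 < n) (hnm : n ≤ m)
    (hub : (m : ℝ) ≤ 0.48 * (B : ℝ) ^ (-(1 : ℝ) / 2) * (C : ℝ) ^ ((1 : ℝ) / 2))
    (hcong : A * m ^ 2 + lam * S * m ≡ B * n ^ 2 + lam * T * n [ZMOD (4 * C)]) :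
    A * m ^ 2 + lam * S * m = B * n ^ 2 + lam * T * n ∧
      A * m ^ 2 - B * n ^ 2 = lam * (T * n - S * m) := by
  have hB : 0 < B := hA.trans hAB
  have hC : 0 ≤ C := (hB.trans hBC).le
  have hBm : 4 * B * m ^ 2 ≤ C := four_mul_mul_sq_le_of_le_rpow hB hC hm.le hub
  have hAm : 4 * A * m ^ 2 ≤ C := by nlinarith [sq_nonneg m]
  have hBn : 4 * B * n ^ 2 ≤ C := by nlinarith [mul_le_mul hnm hnm hn.le hm.le]
  have hSm := abs_two_mul_mul_le_of_sq_eq hA hC hS2 hAm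
  have hTn := abs_two_mul_mul_le_of_sq_eq hB hC hT2 hBn
  have hdiff : |B * n ^ 2 + lam * T * n - (A * m ^ 2 + lam * S * m)| < 4 * C := by
    have hAm0 : 0 ≤ A * m ^ 2 := by positivity
    have hBn0 : 0 ≤ B * n ^ 2 := by positivity
    rw [abs_le] at hSm hTn
    rw [abs_lt]
    rcases hlam with rfl | rfl <;> constructor <;> linarith
  have heq := sub_eq_zero.mp (Int.eq_zero_of_abs_lt_dvd hcong.dvd hdiff)
  exact ⟨heq.symm, by linarith⟩

/-- If `m ≤ 0.48 * B^(-1/2) * C^(1/2)`, then the congruence is an equality. -/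
theorem congruence_to_equality
    (A B C S T lam m n : ℤ)
    (hA : 0 < A) (hAB : A < B) (hBC : B < C) (hB8 : 8 ≤ B)
    (hS : 0 < S) (hT : 0 < T)
    (hS2 : A * C + 1 = S ^ 2) (hT2 : B * C + 1 = T ^ 2)
    (hlam : lam = 1 ∨ lam = -1)
    (hm : 0 < m) (hn : 0 < n) (hnm : n ≤ m)
    (hub : (m : ℝ) ≤ 0.48 * (B : ℝ) ^ (-(1 : ℝ) / 2) * (C : ℝ) ^ ((1 : ℝ) / 2))
    (hcong : A * m ^ 2 + lam * S * m ≡ B * n ^ 2 + lam * T * n [ZMOD (4 * C)]) :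
    A * m ^ 2 + lam * S * m = B * n ^ 2 + lam * T * n ∧
      A * m ^ 2 - B * n ^ 2 = lam * (T * n - S * m) :=
  congruence_to_equality_general A B C S T lam m n hA hAB hBC hS2 hT2 hlam hm hn hnm hub hcong
end
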